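/- For each γ ≥ 0 and each nonnegative weight vector α, let x*(γ, α) be the unique minimizer of (1/2)Σ_{t=1}^n (x_t − y_t)² + γ Σ_{t=1}^{n-1} α_t |x_{t+1} − x_t|. Then the map (γ, α) ↦ x*(γ, α) is continuous on {(γ, α) : γ ≥ 0, α ≥ 0}. -/

import Mathlib

/-!
Adding a convex penalty `g` to `½‖z - y‖²` gives a `1`-strongly convex objective, so comparing
its minimizer `x₁` with the minimizer `x₂` for a second convex penalty `g₂` yields
`½‖x₁ - x₂‖² ≤ (g₁ - g₂) x₂ - (g₁ - g₂) x₁ ≤ L ‖x₁ - x₂‖` whenever `g₁ - g₂` is `L`-Lipschitz.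
For the fused lasso `g_p - g_q = ∑ₜ (γ αₜ - γ' α'ₜ) |zₜ₊₁ - zₜ|`, whose Lipschitz constant is
`O(∑ₜ |γ αₜ - γ' α'ₜ|)`; this tends to `0` as `q = (γ', α') → p = (γ, α)`.
-/

open Set Filter Topology NNReal

/-- Objective of the weighted 1-D fused lasso on an input of size `n+1`. -/
noncomputable def fusedObj (n : ℕ) (y : Fin (n + 1) → ℝ) (α : Fin n → ℝ) (γ : ℝ)
    (x : Fin (n + 1) → ℝ) : ℝ :=
  (1 / 2) * ∑ t, (x t - y t) ^ 2 + γ * ∑ t : Fin n, α t * |x t.succ - x t.castSucc|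

lemma UniformConvexOn.le_sub_of_isMinOn {E : Type*} [NormedAddCommGroup E] [NormedSpace ℝ E]
    {s : Set E} {φ : ℝ → ℝ} {f : E → ℝ} {x v : E} (hf : UniformConvexOn s φ f)
    (hx : IsMinOn f s x) (hxs : x ∈ s) (hv : v ∈ s) : φ ‖v - x‖ / 2 ≤ f v - f x := by
  have hmid := hf.2 hxs hv (by norm_num : (0 : ℝ) ≤ 1 / 2) (by norm_num : (0 : ℝ) ≤ 1 / 2)
    (add_halves 1)
  have hmin := isMinOn_iff.1 hx _ (hf.1 hxs hv (by norm_num) (by norm_num) (add_halves 1))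
  rw [norm_sub_rev] at hmid
  simp only [smul_eq_mul] at hmin hmid
  linarith

lemma lipschitzWith_sum_mul {X ι : Type*} [PseudoMetricSpace X] [Fintype ι] {ψ : ι → X → ℝ}
    {K : ι → ℝ≥0} (hψ : ∀ i, LipschitzWith (K i) (ψ i)) (c : ι → ℝ) :
    LipschitzWith (∑ i, ‖c i‖₊ * K i) fun z ↦ ∑ i, c i * ψ i z := by
  refine LipschitzWith.of_dist_le_mul fun a b ↦ ?_
  simp only [Real.dist_eq, ← Finset.sum_sub_distrib, ← mul_sub, NNReal.coe_sum,
    NNReal.coe_mul, coe_nnnorm, Real.norm_eq_abs, Finset.sum_mul]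
  refine (Finset.abs_sum_le_sum_abs _ _).trans (Finset.sum_le_sum fun i _ ↦ ?_)
  rw [abs_mul, mul_assoc]
  exact mul_le_mul_of_nonneg_left (by simpa [Real.dist_eq] using (hψ i).dist_le_mul a b)
    (abs_nonneg _)

lemma ContinuousLinearMap.convexOn_norm_comp {E F : Type*} [NormedAddCommGroup E]
    [NormedSpace ℝ E] [NormedAddCommGroup F] [NormedSpace ℝ F] (D : E →L[ℝ] F) :
    ConvexOn ℝ univ fun z ↦ ‖D z‖ :=
  (convexOn_norm convex_univ).comp_linearMap D.toLinearMap

section InnerProductSpace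

variable {E : Type*} [NormedAddCommGroup E] [InnerProductSpace ℝ E] {y : E}

lemma ConvexOn.strongConvexOn_half_sq_norm_sub_add {g : E → ℝ} (hg : ConvexOn ℝ univ g)
    (y : E) : StrongConvexOn univ 1 fun z ↦ 1 / 2 * ‖z - y‖ ^ 2 + g z := by
  rw [strongConvexOn_iff_convex]
  have hsplit : (fun z ↦ 1 / 2 * ‖z - y‖ ^ 2 + g z - 1 / 2 * ‖z‖ ^ 2) =
      fun z ↦ g z - innerₛₗ ℝ y z + 1 / 2 * ‖y‖ ^ 2 := by
    ext z
    rw [norm_sub_sq_real, innerₛₗ_apply_apply, real_inner_comm]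
    ring
  rw [hsplit]
  exact (hg.sub ((innerₛₗ ℝ y).concaveOn convex_univ)).add_const _

lemma norm_sub_le_of_isMinOn_half_sq_norm_sub_add {g₁ g₂ : E → ℝ} {x₁ x₂ : E} {L : ℝ≥0}
    (hg₁ : ConvexOn ℝ univ g₁) (hg₂ : ConvexOn ℝ univ g₂)
    (hx₁ : IsMinOn (fun z ↦ 1 / 2 * ‖z - y‖ ^ 2 + g₁ z) univ x₁)
    (hx₂ : IsMinOn (fun z ↦ 1 / 2 * ‖z - y‖ ^ 2 + g₂ z) univ x₂)
    (hL : LipschitzWith L (g₁ - g₂)) : ‖x₁ - x₂‖ ≤ 2 * L := by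
  have h₁ := (hg₁.strongConvexOn_half_sq_norm_sub_add y).le_sub_of_isMinOn hx₁
    (mem_univ _) (mem_univ x₂)
  have h₂ := (hg₂.strongConvexOn_half_sq_norm_sub_add y).le_sub_of_isMinOn hx₂
    (mem_univ _) (mem_univ x₁)
  have hlip := hL.le_add_mul x₂ x₁
  simp only [Pi.sub_apply, dist_eq_norm] at hlip
  rw [norm_sub_rev x₂] at h₁ hlip
  nlinarith [norm_nonneg (x₁ - x₂)]

lemma convexOn_sum_mul {ι : Type*} [Fintype ι] {ψ : ι → E → ℝ} {c : ι → ℝ}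
    (hψ : ∀ i, ConvexOn ℝ univ (ψ i)) (hc : ∀ i, 0 ≤ c i) :
    ConvexOn ℝ univ fun z ↦ ∑ i, c i * ψ i z := by
  have hsum : (fun z ↦ ∑ i, c i * ψ i z) = ∑ i, fun z ↦ c i • ψ i z := by
    ext z
    simp [Finset.sum_apply]
  rw [hsum]
  exact Finset.sum_induction _ (ConvexOn ℝ univ) (fun _ _ ↦ ConvexOn.add)
    (convexOn_const 0 convex_univ) fun i _ ↦ (hψ i).smul (hc i)

theorem continuousOn_of_isMinOn_half_sq_norm_sub_add_sum_mul {P ι : Type*} [TopologicalSpace P]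
    [Fintype ι] {S : Set P} {w : ι → P → ℝ} {ψ : ι → E → ℝ} {K : ι → ℝ≥0} {x : P → E}
    (hw : ∀ i, Continuous (w i)) (hw_nonneg : ∀ p ∈ S, ∀ i, 0 ≤ w i p)
    (hψ_convex : ∀ i, ConvexOn ℝ univ (ψ i)) (hψ_lip : ∀ i, LipschitzWith (K i) (ψ i))
    (hx : ∀ p ∈ S, IsMinOn (fun z ↦ 1 / 2 * ‖z - y‖ ^ 2 + ∑ i, w i p * ψ i z) univ (x p)) :
    ContinuousOn x S := by
  intro p hp
  have hdist : ∀ q ∈ S, dist (x q) (x p) ≤ 2 * ∑ i, |w i q - w i p| * K i := by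
    intro q hq
    have hsub : ((fun z ↦ ∑ i, w i q * ψ i z) - fun z ↦ ∑ i, w i p * ψ i z) =
        fun z ↦ ∑ i, (w i q - w i p) * ψ i z := by
      ext z
      simp only [Pi.sub_apply, ← Finset.sum_sub_distrib, sub_mul]
    have hlip := hsub ▸ lipschitzWith_sum_mul hψ_lip (fun i ↦ w i q - w i p)
    simpa [dist_eq_norm] using norm_sub_le_of_isMinOn_half_sq_norm_sub_add
      (convexOn_sum_mul hψ_convex (hw_nonneg q hq))
      (convexOn_sum_mul hψ_convex (hw_nonneg p hp)) (hx q hq) (hx p hp) hlip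
  have hbound : Tendsto (fun q ↦ 2 * ∑ i, |w i q - w i p| * K i) (𝓝[S] p) (𝓝 0) := by
    have hcont : Continuous fun q ↦ 2 * ∑ i, |w i q - w i p| * K i := by fun_prop
    simpa using (hcont.tendsto p).mono_left nhdsWithin_le_nhds
  exact tendsto_iff_dist_tendsto_zero.2 <| squeeze_zero' (.of_forall fun _ ↦ dist_nonneg)
    (eventually_nhdsWithin_of_forall hdist) hbound

end InnerProductSpace

noncomputable def fusedDiff (n : ℕ) (t : Fin n) : EuclideanSpace ℝ (Fin (n + 1)) →L[ℝ] ℝ :=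
  EuclideanSpace.proj t.succ - EuclideanSpace.proj t.castSucc

/-- The data-fit term of `fusedObj` is a squared Euclidean norm, whereas the norm on
`Fin (n + 1) → ℝ` is the sup norm; hence the passage to `EuclideanSpace`. -/
lemma fusedObj_eq_half_sq_norm_sub_add (n : ℕ) (y : Fin (n + 1) → ℝ) (α : Fin n → ℝ) (γ : ℝ)
    (v : Fin (n + 1) → ℝ) :
    fusedObj n y α γ v = 1 / 2 * ‖WithLp.toLp 2 v - WithLp.toLp 2 y‖ ^ 2 +
      ∑ t, γ * α t * ‖fusedDiff n t (WithLp.toLp 2 v)‖ := by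
  simp [fusedObj, fusedDiff, EuclideanSpace.real_norm_sq_eq, Finset.mul_sum, mul_assoc]

/-- The weighted fused lasso solution `x*(γ, α)` is continuous jointly in the penalty
parameter `γ ≥ 0` and the nonnegative weight vector `α`. -/
theorem fused_lasso_solution_continuous (n : ℕ) (y : Fin (n + 1) → ℝ)
    (x : ℝ × (Fin n → ℝ) → Fin (n + 1) → ℝ)
    (hx : ∀ p : ℝ × (Fin n → ℝ), 0 ≤ p.1 → (∀ t, 0 ≤ p.2 t) →
      ∀ v, fusedObj n y p.2 p.1 (x p) ≤ fusedObj n y p.2 p.1 v) :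
    ContinuousOn x {p : ℝ × (Fin n → ℝ) | 0 ≤ p.1 ∧ ∀ t, 0 ≤ p.2 t} := by
  have hmin : ∀ p ∈ {p : ℝ × (Fin n → ℝ) | 0 ≤ p.1 ∧ ∀ t, 0 ≤ p.2 t},
      IsMinOn (fun z ↦ 1 / 2 * ‖z - WithLp.toLp 2 y‖ ^ 2 +
        ∑ t, p.1 * p.2 t * ‖fusedDiff n t z‖) univ (WithLp.toLp 2 (x p)) := fun p hp ↦
    isMinOn_univ_iff.2 fun z ↦ by
      simpa [fusedObj_eq_half_sq_norm_sub_add] using hx p hp.1 hp.2 z.ofLp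
  have hcont := continuousOn_of_isMinOn_half_sq_norm_sub_add_sum_mul
    (w := fun t (p : ℝ × (Fin n → ℝ)) ↦ p.1 * p.2 t) (fun t ↦ by fun_prop)
    (fun p hp t ↦ mul_nonneg hp.1 (hp.2 t)) (fun t ↦ (fusedDiff n t).convexOn_norm_comp)
    (fun t ↦ lipschitzWith_one_norm.comp (fusedDiff n t).lipschitz) hmin
  exact (PiLp.continuous_ofLp 2 _).comp_continuousOn hcont
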